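/- Let G be a graph and x a vertex such that N_G(x) contains five vertices x_1, ..., x_5 with x_1x_2, x_2x_3, x_3x_4, x_4x_5, x_5x_1 ∉ E(G) (i.e., x_1 x_2 x_3 x_4 x_5 is a 5-cycle in the complement of G restricted to these vertices). Then G contains an induced K_{1,3}, an induced W_4, or an induced W_5, in each case with center x. -/
import Mathlib


/-- `G` contains an induced claw `K_{1,3}` with center `x`. -/
def HasInducedClawAt {V : Type*} (G : SimpleGraph V) (x : V) : Prop :=
  ∃ a b c : V, a ≠ b ∧ a ≠ c ∧ b ≠ c ∧
    G.Adj x a ∧ G.Adj x b ∧ G.Adj x c ∧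
    ¬ G.Adj a b ∧ ¬ G.Adj a c ∧ ¬ G.Adj b c

/-- `G` contains an induced 4-wheel `W₄` with center `x`. -/
def HasInducedW4At {V : Type*} (G : SimpleGraph V) (x : V) : Prop :=
  ∃ a b c d : V, a ≠ c ∧ b ≠ d ∧
    G.Adj x a ∧ G.Adj x b ∧ G.Adj x c ∧ G.Adj x d ∧
    G.Adj a b ∧ G.Adj b c ∧ G.Adj c d ∧ G.Adj d a ∧
    ¬ G.Adj a c ∧ ¬ G.Adj b d

/-- `G` contains an induced 5-wheel `W₅` with center `x`. -/
def HasInducedW5At {V : Type*} (G : SimpleGraph V) (x : V) : Prop :=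
  ∃ w : Fin 5 → V, Function.Injective w ∧ (∀ i, G.Adj x (w i)) ∧
    (∀ i, G.Adj (w i) (w (i + 1))) ∧ (∀ i, ¬ G.Adj (w i) (w (i + 2)))

/-- Endgame (iii): a 5-cycle in the complement inside `N_G(x)` forces an induced claw,
`W₄` or `W₅` with center `x`. -/
theorem statement8 {V : Type*} (G : SimpleGraph V) (x x₁ x₂ x₃ x₄ x₅ : V)
    (h1 : G.Adj x x₁) (h2 : G.Adj x x₂) (h3 : G.Adj x x₃) (h4 : G.Adj x x₄) (h5 : G.Adj x x₅)
    (hne : Function.Injective ![x₁, x₂, x₃, x₄, x₅])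
    (n12 : ¬ G.Adj x₁ x₂) (n23 : ¬ G.Adj x₂ x₃) (n34 : ¬ G.Adj x₃ x₄)
    (n45 : ¬ G.Adj x₄ x₅) (n51 : ¬ G.Adj x₅ x₁) :
    HasInducedClawAt G x ∨ HasInducedW4At G x ∨ HasInducedW5At G x := by
  classical
  have key : ∀ i j : Fin 5, i ≠ j → ![x₁,x₂,x₃,x₄,x₅] i ≠ ![x₁,x₂,x₃,x₄,x₅] j :=
    fun i j hij h => hij (hne h)
  have e12 : x₁ ≠ x₂ := key 0 1 (by decide)
  have e23 : x₂ ≠ x₃ := key 1 2 (by decide)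
  have e34 : x₃ ≠ x₄ := key 2 3 (by decide)
  have e45 : x₄ ≠ x₅ := key 3 4 (by decide)
  have e15 : x₁ ≠ x₅ := key 0 4 (by decide)
  by_cases d13 : G.Adj x₁ x₃
  · by_cases d35 : G.Adj x₃ x₅
    · by_cases d52 : G.Adj x₅ x₂
      · by_cases d24 : G.Adj x₂ x₄
        · by_cases d41 : G.Adj x₄ x₁
          · right; right
            refine ⟨![x₁, x₃, x₅, x₂, x₄], ?_, ?_, ?_, ?_⟩
            · intro a b h
              fin_cases a <;> fin_cases b <;> simp_all <;>
                first
                  | rfl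
                  | exact absurd h d13.ne
                  | exact absurd h.symm d13.ne
                  | exact absurd h d35.ne
                  | exact absurd h.symm d35.ne
                  | exact absurd h d52.ne
                  | exact absurd h.symm d52.ne
                  | exact absurd h d24.ne
                  | exact absurd h.symm d24.ne
                  | exact absurd h d41.ne
                  | exact absurd h.symm d41.ne
                  | exact absurd h e12
                  | exact absurd h.symm e12
                  | exact absurd h e23
                  | exact absurd h.symm e23
                  | exact absurd h e34
                  | exact absurd h.symm e34
                  | exact absurd h e45
                  | exact absurd h.symm e45
                  | exact absurd h e15
                  | exact absurd h.symm e15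
            · intro i; fin_cases i <;> simpa
            · intro i; fin_cases i <;> simp <;>
                first
                  | exact d13 | exact d35 | exact d52 | exact d24 | exact d41
            · intro i; fin_cases i <;> simp <;>
                first
                  | exact n51 | exact n23 | exact n45
                  | exact n12 | exact n34
                  | exact fun h => n51 h.symm
                  | exact fun h => n23 h.symm
                  | exact fun h => n45 h.symm
                  | exact fun h => n12 h.symm
                  | exact fun h => n34 h.symm
          · left
            exact ⟨x₄, x₅, x₁, e45, key 3 0 (by decide), e15.symm, h4, h5, h1,
              n45, d41, n51⟩
        · left
          exact ⟨x₂, x₃, x₄, e23, key 1 3 (by decide), e34, h2, h3, h4, n23, d24, n34⟩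
      · left
        exact ⟨x₅, x₁, x₂, e15.symm, key 4 1 (by decide), e12, h5, h1, h2, n51,
          d52, n12⟩
    · left
      exact ⟨x₃, x₄, x₅, e34, key 2 4 (by decide), e45, h3, h4, h5, n34, d35, n45⟩
  · left
    exact ⟨x₁, x₂, x₃, e12, key 0 2 (by decide), e23, h1, h2, h3, n12, d13, n23⟩
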